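/- Let (x,λ) be a solution of (PD-AVD) and let (x*,λ*) be a primal-dual optimal solution. Then for every μ ∈ Y with ‖μ − λ*‖ ≤ 1 and every t ≥ t₀ one has E_{x*,μ}(t) ≤ 2·E_{x*,λ*}(t₀) + θ(α − 1) + θ²t²·⟨μ − λ*, Ax(t) − b⟩. -/

import Mathlib

open Set MeasureTheory Filter Topology Asymptotics
open scoped RealInnerProductSpace ENNReal

/-- The augmented Lagrangian `L_β(x,λ) = f(x) + ⟪λ, Ax − b⟫ + (β/2)‖Ax − b‖²`. -/
noncomputable def augLagrangian {X Y : Type*}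
    [NormedAddCommGroup X] [InnerProductSpace ℝ X]
    [NormedAddCommGroup Y] [InnerProductSpace ℝ Y]
    (f : X → ℝ) (A : X →L[ℝ] Y) (b : Y) (β : ℝ) (u : X) (μ : Y) : ℝ :=
  f u + ⟪μ, A u - b⟫ + β / 2 * ‖A u - b‖ ^ 2

/-- The energy function `E_{z,μ}(t)` associated to a trajectory `(x,λ)` with velocities
`(x',λ')`, where the product norm on `X × Y` is the Hilbert norm
`‖(u,v)‖² = ‖u‖² + ‖v‖²` and `ξ = θα − θ − 1`. -/
noncomputable def pdEnergy {X Y : Type*}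
    [NormedAddCommGroup X] [InnerProductSpace ℝ X]
    [NormedAddCommGroup Y] [InnerProductSpace ℝ Y]
    (f : X → ℝ) (A : X →L[ℝ] Y) (b : Y) (α β θ : ℝ)
    (x : ℝ → X) (x' : ℝ → X) (l : ℝ → Y) (l' : ℝ → Y)
    (z : X) (μ : Y) (t : ℝ) : ℝ :=
  θ ^ 2 * t ^ 2 *
      (augLagrangian f A b β (x t) μ - augLagrangian f A b β z (l t))
    + 1 / 2 * (‖x t - z + (θ * t) • x' t‖ ^ 2 + ‖l t - μ + (θ * t) • l' t‖ ^ 2)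
    + (θ * α - θ - 1) / 2 * (‖x t - z‖ ^ 2 + ‖l t - μ‖ ^ 2)

/-!
Let `g := L_β(·, λ*)`. It is convex, its gradient `∇f + A*λ* + βA*(A· − b)` vanishes at `x*`,
so `x*` minimizes it, and `L_β(x*, λ) = f(x*) = g(x*)` for every `λ`. Along a solution the
velocities `v_x = x − x* + θtẋ` and `v_λ = λ − λ* + θtλ̇` satisfy
`v̇_x = −ξẋ − θt(∇g(x) + A*v_λ)` and `v̇_λ = −ξλ̇ + θtAv_x`, so the coupling terms cancel in
`d/dt ‖v‖²` and
`Ė_{x*,λ*} = θt(2θ(g(x) − g(x*)) − ⟪x − x*, ∇g(x)⟫) − ξθt‖(ẋ, λ̇)‖² ≤ 0`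
by the gradient inequality and `2θ ≤ 1`. Replacing `λ*` by `μ` shifts the Lagrangian gap by
`⟪μ − λ*, Ax − b⟫` and, since `‖a − c‖² ≤ 2‖a‖² + 2‖c‖²`, costs at most
`(1 + ξ)‖μ − λ*‖² ≤ θ(α − 1)` in the quadratic terms.
-/

theorem HasGradientAt.comp_hasDerivAt {E : Type*} [NormedAddCommGroup E] [InnerProductSpace ℝ E]
    [CompleteSpace E] {g : E → ℝ} {g' : E} {γ : ℝ → E} {γ' : E} {t : ℝ}
    (hg : HasGradientAt g g' (γ t)) (hγ : HasDerivAt γ γ' t) :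
    HasDerivAt (fun s ↦ g (γ s)) ⟪g', γ'⟫ t := by
  simpa [InnerProductSpace.toDual_apply_apply, Function.comp_def] using
    hg.hasFDerivAt.comp_hasDerivAt t hγ

theorem ConvexOn.add_inner_gradient_le {E : Type*} [NormedAddCommGroup E] [InnerProductSpace ℝ E]
    [CompleteSpace E] {f : E → ℝ} {u : E} {g : E} (hf : ConvexOn ℝ univ f)
    (hg : HasGradientAt f g u) (v : E) :
    f u + ⟪g, v - u⟫ ≤ f v := by
  let φ : ℝ →ᵃ[ℝ] E := AffineMap.lineMap u v
  have hd : HasDerivAt (fun s ↦ f (φ s)) ⟪g, v - u⟫ 0 :=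
    HasGradientAt.comp_hasDerivAt (by simpa [φ] using hg) AffineMap.hasDerivAt_lineMap
  have := (hf.comp_affineMap φ).le_slope_of_hasDerivAt (mem_univ 0) (mem_univ 1) one_pos hd
  simp only [slope, sub_zero, inv_one, Function.comp_apply, AffineMap.lineMap_apply_one,
    AffineMap.lineMap_apply_zero, vsub_eq_sub, smul_eq_mul, one_mul, φ] at this
  linarith

section PrimalDual

variable {X Y : Type*} [NormedAddCommGroup X] [InnerProductSpace ℝ X]
  [NormedAddCommGroup Y] [InnerProductSpace ℝ Y]
  {f : X → ℝ} {f' : X → X} {A : X →L[ℝ] Y} {b : Y} {α β θ s : ℝ}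
  {x x' x'' : ℝ → X} {l l' l'' : ℝ → Y}

theorem augLagrangian_of_apply_eq (u : X) (μ : Y) (hu : A u = b) :
    augLagrangian f A b β u μ = f u := by
  simp [augLagrangian, hu]

theorem augLagrangian_eq_add_inner_sub (u : X) (μ ν : Y) :
    augLagrangian f A b β u μ = augLagrangian f A b β u ν + ⟪μ - ν, A u - b⟫ := by
  simp only [augLagrangian, inner_sub_left]
  ring

theorem convexOn_augLagrangian (hf : ConvexOn ℝ univ f) (hβ : 0 ≤ β) (μ : Y) :
    ConvexOn ℝ univ (augLagrangian f A b β · μ) := by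
  let φ : X →ᵃ[ℝ] Y := A.toLinearMap.toAffineMap - AffineMap.const ℝ X b
  have hlin : ConvexOn ℝ univ fun u ↦ ⟪μ, φ u⟫ :=
    ((innerₛₗ ℝ μ).convexOn convex_univ).comp_affineMap φ
  have hsq : ConvexOn ℝ univ fun u ↦ ‖φ u‖ ^ 2 :=
    (convexOn_univ_norm.comp_affineMap φ).pow (fun _ _ ↦ norm_nonneg _) 2
  exact (hf.add hlin).add (hsq.smul (by positivity : 0 ≤ β / 2))

theorem hasDerivAt_dual_velocity (hs : s ≠ 0) (hl : HasDerivAt l (l' s) s)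
    (hl' : HasDerivAt l' (l'' s) s)
    (hode : l'' s + (α / s) • l' s - (A (x s + (θ * s) • x' s) - b) = 0)
    {xs : X} (hxs : A xs = b) (ls : Y) :
    HasDerivAt (fun t ↦ l t - ls + (θ * t) • l' t)
      (-(θ * α - θ - 1) • l' s + (θ * s) • A (x s - xs + (θ * s) • x' s)) s := by
  have hv := (hl.sub_const ls).add (((hasDerivAt_id s).const_mul θ).smul hl')
  refine hv.congr_deriv ?_
  have hl'' : l'' s = -(α / s) • l' s + A (x s + (θ * s) • x' s) - A xs := by
    rw [hxs]
    linear_combination (norm := module) hode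
  rw [hl'']
  simp only [id, map_add, map_sub, map_smul, smul_add, smul_sub, smul_smul]
  match_scalars <;> grind

theorem pdEnergy_le_two_mul_add (hξ : 0 ≤ θ * α - θ - 1) {xs : X} {ls μ : Y}
    (hμ : ‖μ - ls‖ ≤ 1) {t : ℝ}
    (hgap : augLagrangian f A b β xs (l t) ≤ augLagrangian f A b β (x t) ls) :
    pdEnergy f A b α β θ x x' l l' xs μ t ≤
      2 * pdEnergy f A b α β θ x x' l l' xs ls t + θ * (α - 1)
        + θ ^ 2 * t ^ 2 * ⟪μ - ls, A (x t) - b⟫ := by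
  have hsub : ∀ a c : Y, ‖a - c‖ ^ 2 ≤ 2 * ‖a‖ ^ 2 + 2 * ‖c‖ ^ 2 := fun a c ↦ by
    nlinarith [parallelogram_law_with_norm ℝ a c, mul_self_nonneg ‖a + c‖]
  have hv : l t - μ + (θ * t) • l' t = (l t - ls + (θ * t) • l' t) - (μ - ls) := by abel
  have hw : l t - μ = (l t - ls) - (μ - ls) := by abel
  have hd : ‖μ - ls‖ ^ 2 ≤ 1 := by nlinarith [norm_nonneg (μ - ls)]
  have hv' := hsub (l t - ls + (θ * t) • l' t) (μ - ls)
  have hw' := mul_le_mul_of_nonneg_left (hsub (l t - ls) (μ - ls)) hξ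
  have hgap' := mul_le_mul_of_nonneg_left (sub_nonneg.2 hgap) (sq_nonneg (θ * t))
  unfold pdEnergy
  rw [augLagrangian_eq_add_inner_sub (x t) μ ls, hv, hw]
  nlinarith [mul_le_mul_of_nonneg_left hd hξ, sq_nonneg ‖x t - xs + (θ * t) • x' t‖,
    sq_nonneg ‖x t - xs‖, sq_nonneg ‖l t - ls + (θ * t) • l' t‖]

variable [CompleteSpace X] [CompleteSpace Y]

noncomputable def augLagrangianGradient (f' : X → X) (A : X →L[ℝ] Y) (b : Y) (β : ℝ) (u : X)
    (μ : Y) : X :=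
  f' u + A.adjoint μ + β • A.adjoint (A u - b)

theorem hasGradientAt_augLagrangian {u : X} (hf : HasGradientAt f (f' u) u) (μ : Y) :
    HasGradientAt (augLagrangian f A b β · μ) (augLagrangianGradient f' A b β u μ) u := by
  have hAb : HasFDerivAt (fun v ↦ A v - b) A u := A.hasFDerivAt.sub_const b
  have := (hf.hasFDerivAt.add ((hasFDerivAt_const μ u).inner ℝ hAb)).add
    (hAb.norm_sq.const_mul (β / 2))
  rw [hasGradientAt_iff_hasFDerivAt]
  refine this.congr_fderiv ?_
  ext v
  simp [augLagrangianGradient, ContinuousLinearMap.adjoint_inner_left]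
  ring

theorem augLagrangian_le_of_optimal (hf : ConvexOn ℝ univ f) (hβ : 0 ≤ β) {xs : X} {ls : Y}
    (hgrad : HasGradientAt f (f' xs) xs) (hopt₁ : f' xs + A.adjoint ls = 0) (hopt₂ : A xs = b)
    (μ : Y) (u : X) :
    augLagrangian f A b β xs μ ≤ augLagrangian f A b β u ls := by
  have hG : augLagrangianGradient f' A b β xs ls = 0 := by
    simp [augLagrangianGradient, hopt₁, hopt₂]
  have := (convexOn_augLagrangian (A := A) (b := b) hf hβ ls).add_inner_gradient_le
    (hasGradientAt_augLagrangian hgrad ls) u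
  rwa [hG, inner_zero_left, add_zero, augLagrangian_of_apply_eq xs ls hopt₂,
    ← augLagrangian_of_apply_eq (f := f) (β := β) xs μ hopt₂] at this

theorem hasDerivAt_primal_velocity (hs : s ≠ 0) (hx : HasDerivAt x (x' s) s)
    (hx' : HasDerivAt x' (x'' s) s)
    (hode : x'' s + (α / s) • x' s + f' (x s) + A.adjoint (l s + (θ * s) • l' s)
      + β • A.adjoint (A (x s) - b) = 0) (xs : X) (ls : Y) :
    HasDerivAt (fun t ↦ x t - xs + (θ * t) • x' t)
      (-(θ * α - θ - 1) • x' s - (θ * s) • (augLagrangianGradient f' A b β (x s) ls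
        + A.adjoint (l s - ls + (θ * s) • l' s))) s := by
  have hv := (hx.sub_const xs).add (((hasDerivAt_id s).const_mul θ).smul hx')
  refine hv.congr_deriv ?_
  have hx'' : x'' s = -(α / s) • x' s - f' (x s) - A.adjoint (l s + (θ * s) • l' s)
      - β • A.adjoint (A (x s) - b) := by
    linear_combination (norm := module) hode
  rw [hx'']
  simp only [augLagrangianGradient, id, map_add, map_sub, map_smul, smul_add, smul_sub,
    smul_smul]
  match_scalars <;> grind

theorem hasDerivAt_pdEnergy (hf : HasGradientAt f (f' (x s)) (x s)) (hs : s ≠ 0)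
    (hx : HasDerivAt x (x' s) s) (hx' : HasDerivAt x' (x'' s) s)
    (hl : HasDerivAt l (l' s) s) (hl' : HasDerivAt l' (l'' s) s)
    (hode₁ : x'' s + (α / s) • x' s + f' (x s) + A.adjoint (l s + (θ * s) • l' s)
      + β • A.adjoint (A (x s) - b) = 0)
    (hode₂ : l'' s + (α / s) • l' s - (A (x s + (θ * s) • x' s) - b) = 0)
    {xs : X} (hxs : A xs = b) (ls : Y) :
    HasDerivAt (pdEnergy f A b α β θ x x' l l' xs ls)
      (2 * θ ^ 2 * s * (augLagrangian f A b β (x s) ls - f xs)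
        - θ * s * ⟪x s - xs, augLagrangianGradient f' A b β (x s) ls⟫
        - (θ * α - θ - 1) * θ * s * (‖x' s‖ ^ 2 + ‖l' s‖ ^ 2)) s := by
  have hE : pdEnergy f A b α β θ x x' l l' xs ls = fun t ↦
      θ ^ 2 * t ^ 2 * (augLagrangian f A b β (x t) ls - f xs)
        + 1 / 2 * (‖x t - xs + (θ * t) • x' t‖ ^ 2 + ‖l t - ls + (θ * t) • l' t‖ ^ 2)
        + (θ * α - θ - 1) / 2 * (‖x t - xs‖ ^ 2 + ‖l t - ls‖ ^ 2) := by
    funext t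
    simp only [pdEnergy, augLagrangian_of_apply_eq _ _ hxs]
  have hL : HasDerivAt (fun t ↦ augLagrangian f A b β (x t) ls)
      ⟪augLagrangianGradient f' A b β (x s) ls, x' s⟫ s :=
    (hasGradientAt_augLagrangian hf ls).comp_hasDerivAt hx
  have hv := hasDerivAt_primal_velocity hs hx hx' hode₁ xs ls
  have hw := hasDerivAt_dual_velocity hs hl hl' hode₂ hxs ls
  rw [hE]
  refine ((((hasDerivAt_pow 2 s).const_mul (θ ^ 2)).mul (hL.sub_const (f xs))).add
    ((hv.norm_sq.add hw.norm_sq).const_mul (1 / 2))).add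
    (((hx.sub_const xs).norm_sq.add (hl.sub_const ls).norm_sq).const_mul _) |>.congr_deriv ?_
  simp only [map_add, map_sub, map_smul, ContinuousLinearMap.adjoint_inner_right,
    inner_add_left, inner_add_right, inner_sub_left, inner_sub_right, real_inner_smul_left,
    real_inner_smul_right, real_inner_self_eq_norm_sq, real_inner_comm]
  ring

theorem antitoneOn_pdEnergy (hf : ConvexOn ℝ univ f) (hgrad : ∀ u, HasGradientAt f (f' u) u)
    {t₀ : ℝ} (ht₀ : 0 < t₀) (hβ : 0 ≤ β) (hθ₀ : 0 ≤ θ) (hθ : θ ≤ 1 / 2)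
    (hξ : 0 ≤ θ * α - θ - 1)
    (hx : ∀ t ∈ Ici t₀, HasDerivAt x (x' t) t) (hx' : ∀ t ∈ Ici t₀, HasDerivAt x' (x'' t) t)
    (hl : ∀ t ∈ Ici t₀, HasDerivAt l (l' t) t) (hl' : ∀ t ∈ Ici t₀, HasDerivAt l' (l'' t) t)
    (hode₁ : ∀ t ∈ Ici t₀, x'' t + (α / t) • x' t + f' (x t)
      + A.adjoint (l t + (θ * t) • l' t) + β • A.adjoint (A (x t) - b) = 0)
    (hode₂ : ∀ t ∈ Ici t₀, l'' t + (α / t) • l' t - (A (x t + (θ * t) • x' t) - b) = 0)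
    {xs : X} {ls : Y} (hopt₁ : f' xs + A.adjoint ls = 0) (hopt₂ : A xs = b) :
    AntitoneOn (pdEnergy f A b α β θ x x' l l' xs ls) (Ici t₀) := by
  have hE (t : ℝ) (ht : t ∈ Ici t₀) := hasDerivAt_pdEnergy (hgrad (x t))
    (ht₀.trans_le ht).ne' (hx t ht) (hx' t ht) (hl t ht) (hl' t ht) (hode₁ t ht) (hode₂ t ht)
    hopt₂ ls
  refine antitoneOn_of_deriv_nonpos (convex_Ici t₀)
    (fun t ht ↦ (hE t ht).continuousAt.continuousWithinAt)
    (fun t ht ↦ (hE t (interior_subset ht)).differentiableAt.differentiableWithinAt)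
    fun t ht ↦ ?_
  rw [interior_Ici] at ht
  have ht' : t ∈ Ici t₀ := mem_Ici.2 (le_of_lt ht)
  rw [(hE t ht').deriv]
  have hgap : augLagrangian f A b β (x t) ls - f xs
      ≤ ⟪x t - xs, augLagrangianGradient f' A b β (x t) ls⟫ := by
    have := (convexOn_augLagrangian (A := A) (b := b) hf hβ ls).add_inner_gradient_le
      (hasGradientAt_augLagrangian (hgrad (x t)) ls) xs
    rw [augLagrangian_of_apply_eq xs ls hopt₂, ← neg_sub, inner_neg_right,
      real_inner_comm] at this
    linarith
  have hgap₀ : 0 ≤ augLagrangian f A b β (x t) ls - f xs := by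
    have := augLagrangian_le_of_optimal hf hβ (hgrad xs) hopt₁ hopt₂ ls (x t)
    rw [augLagrangian_of_apply_eq xs ls hopt₂] at this
    linarith
  have hθt : 0 ≤ θ * t := mul_nonneg hθ₀ (ht₀.trans ht).le
  have h₁ : 2 * θ ^ 2 * t * (augLagrangian f A b β (x t) ls - f xs)
      ≤ θ * t * (augLagrangian f A b β (x t) ls - f xs) := by
    nlinarith [mul_nonneg hθt hgap₀]
  have h₂ := mul_le_mul_of_nonneg_left hgap hθt
  have h₃ := mul_nonneg (mul_nonneg hξ hθt)
    (add_nonneg (sq_nonneg ‖x' t‖) (sq_nonneg ‖l' t‖))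
  linarith

end PrimalDual

theorem stmt4_general
    {X Y : Type*}
    [NormedAddCommGroup X] [InnerProductSpace ℝ X] [CompleteSpace X]
    [NormedAddCommGroup Y] [InnerProductSpace ℝ Y] [CompleteSpace Y]
    (f : X → ℝ) (f' : X → X) (A : X →L[ℝ] Y) (b : Y)
    (hconv : ConvexOn ℝ univ f)
    (hgrad : ∀ u, HasGradientAt f (f' u) u)
    (t₀ α β θ : ℝ) (ht₀ : 0 < t₀) (hα : 3 ≤ α) (hβ : 0 ≤ β)
    (hθ1 : 1 / (α - 1) ≤ θ) (hθ2 : θ ≤ 1 / 2)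
    (x : ℝ → X) (x' x'' : ℝ → X) (l : ℝ → Y) (l' l'' : ℝ → Y)
    (hx1 : ∀ t ∈ Ici t₀, HasDerivAt x (x' t) t)
    (hx2 : ∀ t ∈ Ici t₀, HasDerivAt x' (x'' t) t)
    (hl1 : ∀ t ∈ Ici t₀, HasDerivAt l (l' t) t)
    (hl2 : ∀ t ∈ Ici t₀, HasDerivAt l' (l'' t) t)
    (hode1 : ∀ t ∈ Ici t₀, x'' t + (α / t) • x' t + f' (x t)
        + (ContinuousLinearMap.adjoint A) (l t + (θ * t) • l' t)
        + β • (ContinuousLinearMap.adjoint A) (A (x t) - b) = 0)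
    (hode2 : ∀ t ∈ Ici t₀, l'' t + (α / t) • l' t
        - (A (x t + (θ * t) • x' t) - b) = 0)
    (xs : X) (ls : Y)
    (hopt1 : f' xs + (ContinuousLinearMap.adjoint A) ls = 0)
    (hopt2 : A xs = b)
    :
    ∀ μ : Y, ‖μ - ls‖ ≤ 1 → ∀ t ∈ Ici t₀,
      pdEnergy f A b α β θ x x' l l' xs μ t ≤
        2 * pdEnergy f A b α β θ x x' l l' xs ls t₀ + θ * (α - 1)
          + θ ^ 2 * t ^ 2 * ⟪μ - ls, A (x t) - b⟫ := by
  intro μ hμ t ht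
  have hθ₀ : 0 < θ := (one_div_pos.2 (by linarith)).trans_le hθ1
  have hξ : 0 ≤ θ * α - θ - 1 := by
    have := (div_le_iff₀ (by linarith : (0 : ℝ) < α - 1)).1 hθ1
    linarith
  have hmono := antitoneOn_pdEnergy hconv hgrad ht₀ hβ hθ₀.le hθ2 hξ hx1 hx2 hl1 hl2 hode1
    hode2 hopt1 hopt2
  calc pdEnergy f A b α β θ x x' l l' xs μ t
      ≤ 2 * pdEnergy f A b α β θ x x' l l' xs ls t + θ * (α - 1)
          + θ ^ 2 * t ^ 2 * ⟪μ - ls, A (x t) - b⟫ :=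
        pdEnergy_le_two_mul_add hξ hμ
          (augLagrangian_le_of_optimal hconv hβ (hgrad xs) hopt1 hopt2 _ _)
    _ ≤ 2 * pdEnergy f A b α β θ x x' l l' xs ls t₀ + θ * (α - 1)
          + θ ^ 2 * t ^ 2 * ⟪μ - ls, A (x t) - b⟫ := by
        gcongr
        exact hmono self_mem_Ici ht ht

theorem stmt4
    {X Y : Type*}
    [NormedAddCommGroup X] [InnerProductSpace ℝ X] [CompleteSpace X]
    [NormedAddCommGroup Y] [InnerProductSpace ℝ Y] [CompleteSpace Y]
    (f : X → ℝ) (f' : X → X) (A : X →L[ℝ] Y) (b : Y)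
    (hconv : ConvexOn ℝ univ f)
    (hgrad : ∀ u, HasGradientAt f (f' u) u)
    (hf'cont : Continuous f')
    (t₀ α β θ : ℝ) (ht₀ : 0 < t₀) (hα : 3 ≤ α) (hβ : 0 ≤ β)
    (hθ1 : 1 / (α - 1) ≤ θ) (hθ2 : θ ≤ 1 / 2)
    (x : ℝ → X) (x' x'' : ℝ → X) (l : ℝ → Y) (l' l'' : ℝ → Y)
    (hx1 : ∀ t ∈ Ici t₀, HasDerivAt x (x' t) t)
    (hx2 : ∀ t ∈ Ici t₀, HasDerivAt x' (x'' t) t)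
    (hx3 : ContinuousOn x'' (Ici t₀))
    (hl1 : ∀ t ∈ Ici t₀, HasDerivAt l (l' t) t)
    (hl2 : ∀ t ∈ Ici t₀, HasDerivAt l' (l'' t) t)
    (hl3 : ContinuousOn l'' (Ici t₀))
    (hode1 : ∀ t ∈ Ici t₀, x'' t + (α / t) • x' t + f' (x t)
        + (ContinuousLinearMap.adjoint A) (l t + (θ * t) • l' t)
        + β • (ContinuousLinearMap.adjoint A) (A (x t) - b) = 0)
    (hode2 : ∀ t ∈ Ici t₀, l'' t + (α / t) • l' t
        - (A (x t + (θ * t) • x' t) - b) = 0)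
    (xs : X) (ls : Y)
    (hopt1 : f' xs + (ContinuousLinearMap.adjoint A) ls = 0)
    (hopt2 : A xs = b)
    :
    ∀ μ : Y, ‖μ - ls‖ ≤ 1 → ∀ t ∈ Ici t₀,
      pdEnergy f A b α β θ x x' l l' xs μ t ≤
        2 * pdEnergy f A b α β θ x x' l l' xs ls t₀ + θ * (α - 1)
          + θ ^ 2 * t ^ 2 * ⟪μ - ls, A (x t) - b⟫ :=
  stmt4_general f f' A b hconv hgrad t₀ α β θ ht₀ hα hβ hθ1 hθ2 x x' x'' l l' l'' hx1 hx2 hl1 hl2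
    hode1 hode2 xs ls hopt1 hopt2
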